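/- arXiv:1812.11597 — 5 statements merged into one kernel-verified Lean document; each statement's English description precedes it below -/
import Mathlib

section
/- Every nonzero linear (additive) one-dimensional cellular automaton over the binary alphabet is surjective on the full shift space: for every bi-infinite binary configuration x there exists a configuration y whose image under the global CA map is x. -/
def fwdAux (R : ℕ) (a : Fin (2*R+1) → ZMod 2) (x : ℤ → ZMod 2)
    (mx : Fin (2*R+1)) : ℕ → ZMod 2
  | n => x (n : ℤ) + ∑ i : Fin (2*R+1),
      if _h : (i : ℤ) < (mx : ℤ) then
        a i * (if _h2 : 0 ≤ (n : ℤ) + (i : ℤ) - (mx : ℤ) then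
          fwdAux R a x mx ((n : ℤ) + (i : ℤ) - (mx : ℤ)).toNat else 0)
      else 0
  termination_by n => n
  decreasing_by omega

def backAux (R : ℕ) (a : Fin (2*R+1) → ZMod 2) (x : ℤ → ZMod 2)
    (mn : Fin (2*R+1)) : ℕ → ZMod 2
  | n => x (-(n : ℤ) - 1) + ∑ i : Fin (2*R+1),
      if _h : (mn : ℤ) < (i : ℤ) then
        a i * (if _h2 : 0 ≤ (n : ℤ) + (mn : ℤ) - (i : ℤ) then
          backAux R a x mn ((n : ℤ) + (mn : ℤ) - (i : ℤ)).toNat else 0)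
      else 0
  termination_by n => n
  decreasing_by omega

/-- Every nonzero linear (additive) 1D binary CA is surjective on the full shift. -/
theorem nonzero_linear_CA_surjective (R : ℕ) (a : Fin (2*R+1) → ZMod 2) (ha : a ≠ 0)
    (Φ : (ℤ → ZMod 2) → (ℤ → ZMod 2))
    (hΦ : ∀ x r, Φ x r = ∑ i : Fin (2*R+1), a i * x (r + (i : ℤ) - (R : ℤ))) :
    ∀ x : ℤ → ZMod 2, ∃ y : ℤ → ZMod 2, Φ y = x := by
  classical
  intro x
  have hone : ∀ z : ZMod 2, z ≠ 0 → z = 1 := by decide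
  have hzz : ∀ z : ZMod 2, z + z = 0 := by decide
  have hex : ∃ i, a i ≠ 0 := by
    by_contra h; push_neg at h; exact ha (funext h)
  set S : Finset (Fin (2*R+1)) := Finset.univ.filter (fun i => a i ≠ 0) with hS
  have hSne : S.Nonempty := by
    obtain ⟨i, hi⟩ := hex
    exact ⟨i, by simp [hS, hi]⟩
  set mx := S.max' hSne with hmxdef
  set mn := S.min' hSne with hmndef
  have hmem : ∀ i : Fin (2*R+1), i ∈ S ↔ a i ≠ 0 := by intro i; simp [hS]
  have hamx : a mx = 1 := hone _ ((hmem mx).1 (S.max'_mem hSne))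
  have hamn : a mn = 1 := hone _ ((hmem mn).1 (S.min'_mem hSne))
  have hlemx : ∀ i, a i ≠ 0 → (i : ℤ) ≤ (mx : ℤ) := by
    intro i hi
    have := S.le_max' i ((hmem i).2 hi)
    exact_mod_cast Fin.le_def.mp this
  have hlemn : ∀ i, a i ≠ 0 → (mn : ℤ) ≤ (i : ℤ) := by
    intro i hi
    have := S.min'_le i ((hmem i).2 hi)
    exact_mod_cast Fin.le_def.mp this
  have hmnmx : (mn : ℤ) ≤ (mx : ℤ) := by
    have := hlemx mn (by rw [hamn]; exact one_ne_zero)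
    have := hlemn mx (by rw [hamx]; exact one_ne_zero)
    omega
  -- the preimage configuration
  set y : ℤ → ZMod 2 := fun s =>
    if s < (mn : ℤ) - R then backAux R a x mn ((mn : ℤ) - R - 1 - s).toNat
    else if s < (mx : ℤ) - R then 0
    else fwdAux R a x mx (s - ((mx : ℤ) - R)).toNat with hy
  have hyf : ∀ s : ℤ, (mx : ℤ) - R ≤ s →
      y s = fwdAux R a x mx (s - ((mx : ℤ) - R)).toNat := by
    intro s hs
    rw [hy]
    simp only
    rw [if_neg (by omega), if_neg (by omega)]
  have hyw : ∀ s : ℤ, (mn : ℤ) - R ≤ s → s < (mx : ℤ) - R → y s = 0 := by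
    intro s h1 h2
    rw [hy]; simp only
    rw [if_neg (by omega), if_pos h2]
  have hyb : ∀ s : ℤ, s < (mn : ℤ) - R →
      y s = backAux R a x mn ((mn : ℤ) - R - 1 - s).toNat := by
    intro s hs
    rw [hy]; simp only
    rw [if_pos hs]
  refine ⟨y, funext fun r => ?_⟩
  rw [hΦ]
  rcases le_or_gt 0 r with hr | hr
  · -- forward case
    have hrt : ((r.toNat : ℕ) : ℤ) = r := Int.toNat_of_nonneg hr
    have e1 : y (r + (mx : ℤ) - R) = fwdAux R a x mx r.toNat := by
      rw [hyf _ (by omega)]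
      congr 1
      omega
    have e2 : fwdAux R a x mx r.toNat = x r + ∑ i : Fin (2*R+1),
        (if (i : ℤ) < (mx : ℤ) then
          a i * (if 0 ≤ r + (i : ℤ) - (mx : ℤ) then
            fwdAux R a x mx (r + (i : ℤ) - (mx : ℤ)).toNat else 0)
        else 0) := by
      rw [fwdAux]
      simp only [dite_eq_ite, hrt]
    have key : ∀ i : Fin (2*R+1),
        a i * y (r + (i : ℤ) - (R : ℤ)) =
        (if (i : ℤ) < (mx : ℤ) then
          a i * (if 0 ≤ r + (i : ℤ) - (mx : ℤ) then
            fwdAux R a x mx (r + (i : ℤ) - (mx : ℤ)).toNat else 0)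
        else 0) + (if i = mx then y (r + (mx : ℤ) - R) else 0) := by
      intro i
      by_cases him : i = mx
      · subst him
        rw [if_neg (lt_irrefl _), if_pos rfl, hamx, one_mul, zero_add]
      · rw [if_neg him, add_zero]
        by_cases hlt : (i : ℤ) < (mx : ℤ)
        · rw [if_pos hlt]
          by_cases hai : a i = 0
          · rw [hai, zero_mul, zero_mul]
          · have hmni := hlemn i hai
            congr 1
            by_cases hpos : 0 ≤ r + (i : ℤ) - (mx : ℤ)
            · rw [if_pos hpos, hyf _ (by omega)]
              congr 1
              omega
            · rw [if_neg hpos, hyw _ (by omega) (by omega)]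
        · rw [if_neg hlt]
          have hai : a i = 0 := by
            by_contra hai
            have := hlemx i hai
            exact him (Fin.ext (by omega))
          rw [hai, zero_mul]
    calc ∑ i : Fin (2*R+1), a i * y (r + (i : ℤ) - (R : ℤ))
        = ∑ i : Fin (2*R+1), ((if (i : ℤ) < (mx : ℤ) then
            a i * (if 0 ≤ r + (i : ℤ) - (mx : ℤ) then
              fwdAux R a x mx (r + (i : ℤ) - (mx : ℤ)).toNat else 0)
          else 0) + (if i = mx then y (r + (mx : ℤ) - R) else 0)) :=
          Finset.sum_congr rfl (fun i _ => key i)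
      _ = (∑ i : Fin (2*R+1), (if (i : ℤ) < (mx : ℤ) then
            a i * (if 0 ≤ r + (i : ℤ) - (mx : ℤ) then
              fwdAux R a x mx (r + (i : ℤ) - (mx : ℤ)).toNat else 0)
          else 0)) + ∑ i : Fin (2*R+1), (if i = mx then y (r + (mx : ℤ) - R) else 0) :=
          Finset.sum_add_distrib
      _ = x r := by
          rw [Finset.sum_ite_eq' Finset.univ mx (fun _ => y (r + (mx : ℤ) - R))]
          rw [if_pos (Finset.mem_univ mx), e1, e2]
          generalize (∑ i : Fin (2*R+1), (if (i : ℤ) < (mx : ℤ) then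
            a i * (if 0 ≤ r + (i : ℤ) - (mx : ℤ) then
              fwdAux R a x mx (r + (i : ℤ) - (mx : ℤ)).toNat else 0)
          else 0)) = T
          linear_combination hzz T
  · -- backward case
    have hrt : (((-1 - r).toNat : ℕ) : ℤ) = -1 - r := Int.toNat_of_nonneg (by omega)
    have e1 : y (r + (mn : ℤ) - R) = backAux R a x mn (-1 - r).toNat := by
      rw [hyb _ (by omega)]
      congr 1
      omega
    have e2 : backAux R a x mn (-1 - r).toNat = x r + ∑ i : Fin (2*R+1),
        (if (mn : ℤ) < (i : ℤ) then
          a i * (if 0 ≤ (-1 - r) + (mn : ℤ) - (i : ℤ) then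
            backAux R a x mn ((-1 - r) + (mn : ℤ) - (i : ℤ)).toNat else 0)
        else 0) := by
      rw [backAux]
      simp only [dite_eq_ite, hrt]
      congr 1
      congr 1
      omega
    have key : ∀ i : Fin (2*R+1),
        a i * y (r + (i : ℤ) - (R : ℤ)) =
        (if (mn : ℤ) < (i : ℤ) then
          a i * (if 0 ≤ (-1 - r) + (mn : ℤ) - (i : ℤ) then
            backAux R a x mn ((-1 - r) + (mn : ℤ) - (i : ℤ)).toNat else 0)
        else 0) + (if i = mn then y (r + (mn : ℤ) - R) else 0) := by
      intro i
      by_cases him : i = mn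
      · subst him
        rw [if_neg (lt_irrefl _), if_pos rfl, hamn, one_mul, zero_add]
      · rw [if_neg him, add_zero]
        by_cases hlt : (mn : ℤ) < (i : ℤ)
        · rw [if_pos hlt]
          by_cases hai : a i = 0
          · rw [hai, zero_mul, zero_mul]
          · have hmxi := hlemx i hai
            congr 1
            by_cases hpos : 0 ≤ (-1 - r) + (mn : ℤ) - (i : ℤ)
            · rw [if_pos hpos, hyb _ (by omega)]
              congr 1
              omega
            · rw [if_neg hpos, hyw _ (by omega) (by omega)]
        · rw [if_neg hlt]
          have hai : a i = 0 := by
            by_contra hai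
            have := hlemn i hai
            exact him (Fin.ext (by omega))
          rw [hai, zero_mul]
    calc ∑ i : Fin (2*R+1), a i * y (r + (i : ℤ) - (R : ℤ))
        = ∑ i : Fin (2*R+1), ((if (mn : ℤ) < (i : ℤ) then
            a i * (if 0 ≤ (-1 - r) + (mn : ℤ) - (i : ℤ) then
              backAux R a x mn ((-1 - r) + (mn : ℤ) - (i : ℤ)).toNat else 0)
          else 0) + (if i = mn then y (r + (mn : ℤ) - R) else 0)) :=
          Finset.sum_congr rfl (fun i _ => key i)
      _ = (∑ i : Fin (2*R+1), (if (mn : ℤ) < (i : ℤ) then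
            a i * (if 0 ≤ (-1 - r) + (mn : ℤ) - (i : ℤ) then
              backAux R a x mn ((-1 - r) + (mn : ℤ) - (i : ℤ)).toNat else 0)
          else 0)) + ∑ i : Fin (2*R+1), (if i = mn then y (r + (mn : ℤ) - R) else 0) :=
          Finset.sum_add_distrib
      _ = x r := by
          rw [Finset.sum_ite_eq' Finset.univ mn (fun _ => y (r + (mn : ℤ) - R))]
          rw [if_pos (Finset.mem_univ mn), e1, e2]
          generalize (∑ i : Fin (2*R+1), (if (mn : ℤ) < (i : ℤ) then
            a i * (if 0 ≤ (-1 - r) + (mn : ℤ) - (i : ℤ) then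
              backAux R a x mn ((-1 - r) + (mn : ℤ) - (i : ℤ)).toNat else 0)
          else 0)) = T
          linear_combination hzz T
end

section
/- The second-order lookup table of ECA rule 22 restricted to the rule-22 domain language agrees with the second power of rule 90: for every radius-2 neighborhood η² included in LUT(φ²₂₂|L(Λ₂₂)), i.e. every length-5 word in the rule-22 domain language L(Λ₂₂), φ²₂₂(η²) = φ²₉₀(η²) = η₋₂ + η₂ (mod 2), where φ²₉₀ has coefficient vector (1,0,0,0,1). -/
/-- The local rule of ECA 22: outputs 1 exactly on neighborhoods 100, 010, 001. -/
def phi22 (a b c : ZMod 2) : ZMod 2 :=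
  if (a, b, c) = (1, 0, 0) ∨ (a, b, c) = (0, 1, 0) ∨ (a, b, c) = (0, 0, 1) then 1 else 0

/-- The second-order lookup table of ECA 22. -/
def phi22sq (η : Fin 5 → ZMod 2) : ZMod 2 :=
  phi22 (phi22 (η 0) (η 1) (η 2)) (phi22 (η 1) (η 2) (η 3)) (phi22 (η 2) (η 3) (η 4))

/-- The length-5 words of the rule-22 domain language (non-dash rows of Table IV). -/
def domain22words : Set (Fin 5 → ZMod 2) :=
  {![1,1,1,0,1], ![1,1,1,0,0], ![1,1,0,1,1], ![1,1,0,0,0], ![1,0,1,1,1],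
   ![1,0,0,0,1], ![1,0,0,0,0], ![0,1,1,1,0], ![0,1,0,0,0], ![0,0,1,1,1],
   ![0,0,1,0,0], ![0,0,0,1,1], ![0,0,0,1,0], ![0,0,0,0,1], ![0,0,0,0,0]}

/-- The second-order rule 22 lookup table restricted to the rule-22 domain language
agrees with the second power of rule 90 (coefficient vector (1,0,0,0,1)). -/
theorem rule22sq_restricted_linearizes_to_rule90sq :
    ∀ η ∈ domain22words, phi22sq η = η 0 + η 4 := by
  intro η hη
  simp only [domain22words, Set.mem_insert_iff, Set.mem_singleton_iff] at hη
  rcases hη with h|h|h|h|h|h|h|h|h|h|h|h|h|h|h <;> subst h <;> decide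
end

section
/- For any additive ECA with coefficient vector a and any p ≥ 1, the p-th order lookup table is additive with coefficient vector equal to the p-fold mod-2 convolution of a with itself; in particular for rule 90, the n-th order lookup table is the linear rule with coefficients given by binomial coefficients: φⁿ₉₀(x₋ₙ,...,xₙ) = Σ_{k=0}^{n} C(n,k) x_{2k-n} (mod 2). -/
/-- p-fold mod-2 convolution power of a coefficient vector `a : ℤ → ZMod 2`
(supported on [-1,1]); `convPow a p` is supported on [-p,p]. -/
noncomputable def convPow (a : ℤ → ZMod 2) : ℕ → ℤ → ZMod 2
  | 0, k => if k = 0 then 1 else 0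
  | p + 1, k => ∑ i ∈ Finset.Icc (-(p : ℤ)) (p : ℤ), convPow a p i * a (k - i)

/-!
Applying a rule `x ↦ (r ↦ ∑_{|j| ≤ n} a j x(r + j))` after one of radius `m` with coefficients
`c` gives a rule of radius `m + n` with coefficients `k ↦ ∑ᵢ c i a (k - i)`: exchange the two sums
and substitute `k = i + j`; since `a` vanishes outside `[-n, n]`, the range of `k` may be taken to
be `[-(m + n), m + n]` for every `i`. This is the recursion defining `convPow`, so induction on `p`
gives the coefficients of `Φ^[p]`. For rule 90 the iterate is computed directly by Pascal's rule.
-/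

open Finset

lemma Finset.sum_Icc_sub_add {M : Type*} [AddCommMonoid M] (g : ℤ → M) (i n : ℤ) :
    ∑ k ∈ Icc (i - n) (i + n), g k = ∑ j ∈ Icc (-n) n, g (i + j) := by
  rw [sub_eq_add_neg, ← map_add_left_Icc, sum_map]
  rfl

section

variable {R : Type*} [CommSemiring R]

def IsLinearRule (Φ : (ℤ → R) → ℤ → R) (c : ℤ → R) (m : ℕ) : Prop :=
  ∀ x r, Φ x r = ∑ i ∈ Icc (-(m : ℤ)) m, c i * x (r + i)

lemma isLinearRule_id :
    IsLinearRule (id : (ℤ → R) → ℤ → R) (fun k => if k = 0 then 1 else 0) 0 := by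
  intro x r
  simp

lemma sum_Icc_mul_shift_of_abs_le {a : ℤ → R} {n : ℕ} (ha : ∀ j, (n : ℤ) < |j| → a j = 0)
    {m : ℕ} {i : ℤ} (hi : |i| ≤ m) (y : ℤ → R) :
    ∑ k ∈ Icc (-((m + n : ℕ) : ℤ)) (m + n : ℕ), a (k - i) * y k =
      ∑ j ∈ Icc (-(n : ℤ)) n, a j * y (i + j) := by
  have hshift := sum_Icc_sub_add (fun k => a (k - i) * y k) i n
  simp only [add_sub_cancel_left] at hshift
  rw [← hshift]
  rw [abs_le] at hi
  refine (sum_subset (fun k hk => ?_) fun k _ hk => ?_).symm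
  · simp only [mem_Icc] at hk ⊢
    omega
  · rw [ha (k - i) ?_, zero_mul]
    simp only [mem_Icc, not_and_or, not_le] at hk
    rw [lt_abs]
    omega

theorem IsLinearRule.comp {Φ Ψ : (ℤ → R) → ℤ → R} {a c : ℤ → R} {m n : ℕ}
    (hΦ : IsLinearRule Φ a n) (ha : ∀ j, (n : ℤ) < |j| → a j = 0) (hΨ : IsLinearRule Ψ c m) :
    IsLinearRule (Φ ∘ Ψ) (fun k => ∑ i ∈ Icc (-(m : ℤ)) m, c i * a (k - i)) (m + n) := by
  intro x r
  calc Φ (Ψ x) r = ∑ j ∈ Icc (-(n : ℤ)) n, a j * ∑ i ∈ Icc (-(m : ℤ)) m, c i * x (r + (i + j)) := by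
        refine (hΦ _ r).trans (sum_congr rfl fun j _ => ?_)
        simp only [hΨ x, ← add_assoc, add_right_comm r j]
    _ = ∑ i ∈ Icc (-(m : ℤ)) m, c i * ∑ j ∈ Icc (-(n : ℤ)) n, a j * x (r + (i + j)) := by
        simp only [mul_sum]
        rw [sum_comm]
        refine sum_congr rfl fun i _ => sum_congr rfl fun j _ => by ring
    _ = ∑ i ∈ Icc (-(m : ℤ)) m, c i * ∑ k ∈ Icc (-((m + n : ℕ) : ℤ)) (m + n : ℕ),
          a (k - i) * x (r + k) :=
        sum_congr rfl fun i hi => by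
          rw [sum_Icc_mul_shift_of_abs_le ha (abs_le.mpr (mem_Icc.mp hi))]
    _ = _ := by
        simp only [mul_sum, sum_mul, mul_assoc]
        rw [sum_comm]

lemma IsLinearRule.iterate {Φ : (ℤ → ZMod 2) → ℤ → ZMod 2} {a : ℤ → ZMod 2}
    (hΦ : IsLinearRule Φ a 1) (ha : ∀ j : ℤ, 1 < |j| → a j = 0) (p : ℕ) :
    IsLinearRule Φ^[p] (convPow a p) p := by
  induction p with
  | zero => exact isLinearRule_id
  | succ p ih =>
    rw [Function.iterate_succ']
    exact hΦ.comp (by simpa using ha) ih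

lemma iterate_rule90_apply (x : ℤ → R) (r : ℤ) (n : ℕ) :
    ((fun y : ℤ → R => fun s => y (s - 1) + y (s + 1))^[n] x) r =
      ∑ k ∈ range (n + 1), (n.choose k : R) * x (r + 2 * k - n) := by
  induction n generalizing r with
  | zero => simp
  | succ n ih =>
    rw [Function.iterate_succ_apply', ih, ih]
    convert (sum_choose_succ_mul (fun i j => x (r + i - j)) n).symm using 1
    · congr 1 <;> refine sum_congr rfl fun k hk => ?_ <;>
        rw [Nat.cast_sub (by simp at hk; omega)] <;> push_cast <;> ring_nf
    · refine sum_congr rfl fun k hk => ?_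
      rw [Nat.cast_sub (by simp at hk; omega)]
      push_cast
      ring_nf

end

theorem additive_ECA_power_is_convolution_general (a : ℤ → ZMod 2)
    (ha : ∀ i : ℤ, 1 < |i| → a i = 0)
    (Φ : (ℤ → ZMod 2) → (ℤ → ZMod 2))
    (hΦ : ∀ x r, Φ x r = ∑ i ∈ Finset.Icc (-1 : ℤ) 1, a i * x (r + i))
    (p : ℕ) :
    (∀ x r, (Φ^[p] x) r = ∑ i ∈ Finset.Icc (-(p : ℤ)) (p : ℤ), convPow a p i * x (r + i)) ∧
    (∀ (x : ℤ → ZMod 2) (r : ℤ) (n : ℕ),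
      ((fun y : ℤ → ZMod 2 => fun s => y (s - 1) + y (s + 1))^[n] x) r =
        ∑ k ∈ Finset.range (n + 1), ((Nat.choose n k : ℕ) : ZMod 2) * x (r + 2 * k - n)) := by
  have hΦ₁ : IsLinearRule Φ a 1 := fun x r => by simpa using hΦ x r
  exact ⟨hΦ₁.iterate ha p, fun x r n => iterate_rule90_apply x r n⟩

/-- For an additive ECA the p-th order lookup table is additive with coefficients the
p-fold convolution of `a`; in particular for rule 90 the n-th order lookup table is
the linear rule with mod-2 binomial coefficients. -/
theorem additive_ECA_power_is_convolution (a : ℤ → ZMod 2)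
    (ha : ∀ i : ℤ, 1 < |i| → a i = 0)
    (Φ : (ℤ → ZMod 2) → (ℤ → ZMod 2))
    (hΦ : ∀ x r, Φ x r = ∑ i ∈ Finset.Icc (-1 : ℤ) 1, a i * x (r + i))
    (p : ℕ) (hp : 1 ≤ p) :
    (∀ x r, (Φ^[p] x) r = ∑ i ∈ Finset.Icc (-(p : ℤ)) (p : ℤ), convPow a p i * x (r + i)) ∧
    (∀ (x : ℤ → ZMod 2) (r : ℤ) (n : ℕ),
      ((fun y : ℤ → ZMod 2 => fun s => y (s - 1) + y (s + 1))^[n] x) r =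
        ∑ k ∈ Finset.range (n + 1), ((Nat.choose n k : ℕ) : ZMod 2) * x (r + 2 * k - n)) :=
  additive_ECA_power_is_convolution_general a ha Φ hΦ p
end

section
/- The even-blocks shift is invariant under rule 90: if x is a bi-infinite binary configuration in which every maximal run of equal symbols has even length, then Φ₉₀(x) = Φ₁₂₆(x); i.e., rule 126 and rule 90 agree pointwise on configurations of the even domain. -/
/-- The global map of ECA 90. -/
def Phi90 (x : ℤ → ZMod 2) : ℤ → ZMod 2 := fun r => x (r - 1) + x (r + 1)

/-- The local rule of ECA 126. -/
def phi126 (a b c : ZMod 2) : ZMod 2 :=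
  if (a, b, c) = (0, 0, 0) ∨ (a, b, c) = (1, 1, 1) then 0 else 1

/-- The global map of ECA 126. -/
def Phi126 (x : ℤ → ZMod 2) : ℤ → ZMod 2 := fun r => phi126 (x (r - 1)) (x r) (x (r + 1))

/-- On configurations of the even-blocks shift (every length-3 factor avoids 101 and 010),
rules 126 and 90 agree pointwise. -/
theorem rule126_eq_rule90_on_even_shift :
    ∀ x : ℤ → ZMod 2,
      (∀ r : ℤ, (x (r - 1), x r, x (r + 1)) ≠ (1, 0, 1) ∧
                (x (r - 1), x r, x (r + 1)) ≠ (0, 1, 0)) →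
      Phi90 x = Phi126 x := by
  intro x h
  funext r
  obtain ⟨h1, h2⟩ := h r
  have cases2 : ∀ z : ZMod 2, z = 0 ∨ z = 1 := by decide
  rcases cases2 (x (r - 1)) with ha | ha <;>
    rcases cases2 (x r) with hb | hb <;>
      rcases cases2 (x (r + 1)) with hc | hc <;>
        simp_all [Phi90, Phi126, phi126] <;> decide
end

section
/- For ECA rule 18 evolving a configuration in the 0-Σ shift, the orbit coincides with that of rule 90: if x has x_r = 0 for all even r (or all odd r), then Φ₁₈(x) = Φ₉₀(x), and consequently Φ₁₈ⁿ(x) = Φ₉₀ⁿ(x) for all n ≥ 0. -/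
/-- The local rule of ECA 18. -/
def phi18 (a b c : ZMod 2) : ZMod 2 :=
  if (a, b, c) = (1, 0, 0) ∨ (a, b, c) = (0, 0, 1) then 1 else 0

/-- The global map of ECA 18. -/
def Phi18 (x : ℤ → ZMod 2) : ℤ → ZMod 2 := fun r => phi18 (x (r - 1)) (x r) (x (r + 1))

lemma phi18_zero_mid (a c : ZMod 2) : phi18 a 0 c = a + c := by
  fin_cases a <;> fin_cases c <;> decide

lemma phi18_zero_sides (b : ZMod 2) : phi18 0 b 0 = 0 := by
  fin_cases b <;> decide

lemma zeroSigma_eq (x : ℤ → ZMod 2)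
    (h : (∀ r : ℤ, Even r → x r = 0) ∨ (∀ r : ℤ, Odd r → x r = 0)) :
    Phi18 x = Phi90 x := by
  funext r
  unfold Phi18 Phi90
  rcases Int.even_or_odd r with hr | hr
  · rcases h with h | h
    · rw [h r hr, phi18_zero_mid]
    · have h1 : x (r - 1) = 0 := h _ (hr.sub_odd odd_one)
      have h2 : x (r + 1) = 0 := h _ hr.add_one
      rw [h1, h2, phi18_zero_sides]; ring
  · rcases h with h | h
    · have h1 : x (r - 1) = 0 := h _ (hr.sub_odd odd_one)
      have h2 : x (r + 1) = 0 := h _ hr.add_one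
      rw [h1, h2, phi18_zero_sides]; ring
    · rw [h r hr, phi18_zero_mid]

lemma zeroSigma_inv (x : ℤ → ZMod 2)
    (h : (∀ r : ℤ, Even r → x r = 0) ∨ (∀ r : ℤ, Odd r → x r = 0)) :
    (∀ r : ℤ, Even r → Phi90 x r = 0) ∨ (∀ r : ℤ, Odd r → Phi90 x r = 0) := by
  rcases h with h | h
  · right
    intro r hr
    have h1 : x (r - 1) = 0 := h _ (hr.sub_odd odd_one)
    have h2 : x (r + 1) = 0 := h _ hr.add_one
    simp [Phi90, h1, h2]
  · left
    intro r hr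
    have h1 : x (r - 1) = 0 := h _ (hr.sub_odd odd_one)
    have h2 : x (r + 1) = 0 := h _ hr.add_one
    simp [Phi90, h1, h2]

/-- On the 0-Σ shift, rule 18 agrees with rule 90, and hence their orbits coincide. -/
theorem rule18_orbit_eq_rule90_orbit_on_zeroSigma :
    ∀ x : ℤ → ZMod 2,
      ((∀ r : ℤ, Even r → x r = 0) ∨ (∀ r : ℤ, Odd r → x r = 0)) →
      Phi18 x = Phi90 x ∧ ∀ n : ℕ, Phi18^[n] x = Phi90^[n] x := by
  intro x hx
  refine ⟨zeroSigma_eq x hx, ?_⟩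
  intro n
  induction n generalizing x hx with
  | zero => rfl
  | succ n ih =>
    rw [Function.iterate_succ_apply, Function.iterate_succ_apply,
      zeroSigma_eq x hx]
    exact ih _ (zeroSigma_inv x hx)
end
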